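/- Let $k=\mathbb{F}_{2^m}$ with $m$ even, $e\in(k^*)^3$, $e=\lambda^3$. If all three cube roots $\lambda,\lambda\epsilon,\lambda\epsilon^2$ of $e$ lie in $\mathrm{AS}(k)$ then $x^4+x^3+x^2+x+e$ splits into four linear factors over $k$; otherwise (exactly one cube root lies in $\mathrm{AS}(k)$) it factors as a product of two irreducible quadratics. -/

import Mathlib

/-!
Write `AS(k)` for the image of the additive map `t ↦ t + t²`. In characteristic 2 we have
`X⁴ + X³ + X² + X = X (X + 1)³`, and for `λ = t + t²` the quartic `X⁴ + X³ + X² + X + λ³` is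
`(X² + (t + 1) X + t³) (X² + t X + (t + 1)³)`. A quadratic `X² + b X + c` with `b ≠ 0` has a root
iff `c / b² ∈ AS(k)`, and for both factors `c / b²` is congruent to `λε` modulo `AS(k)`. So when
`λ ∈ AS(k)` the two factors split if `λε ∈ AS(k)` and are irreducible otherwise. As the kernel of
`t ↦ t + t²` is `{0, 1}`, `AS(k)` has index 2, so `λ + λε + λε² = 0` forces either all three cube
roots into `AS(k)`, or some cube root `μ` with `μ ∈ AS(k)` and `με ∉ AS(k)`.
-/

open Polynomial

theorem AddSubgroup.mem_and_notMem_of_index_eq_two {G : Type*} [AddGroup G] {H : AddSubgroup G}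
    (hH : H.index = 2) {a b c : G} (habc : a + b + c = 0) (h : ¬(a ∈ H ∧ b ∈ H ∧ c ∈ H)) :
    (a ∈ H ∧ b ∉ H) ∨ (b ∈ H ∧ c ∉ H) ∨ (c ∈ H ∧ a ∉ H) := by
  have hc : c ∈ H ↔ (a ∈ H ↔ b ∈ H) := by
    rw [eq_neg_of_add_eq_zero_right habc, neg_mem_iff, add_mem_iff_of_index_two hH]
  tauto

section CommRing

variable {R : Type*} [CommRing R]

noncomputable def quadFactor (t : R) : R[X] := X ^ 2 + C (t + 1) * X + C (t ^ 3)

theorem isRoot_quadFactor_iff {t r : R} :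
    (quadFactor t).IsRoot r ↔ r ^ 2 + (t + 1) * r + t ^ 3 = 0 := by
  simp [quadFactor]

theorem monic_quadFactor [Nontrivial R] (t : R) : (quadFactor t).Monic := by
  unfold quadFactor; monicity!

theorem degree_quadFactor [Nontrivial R] (t : R) : (quadFactor t).degree = 2 := by
  unfold quadFactor; compute_degree!

variable [CharP R 2]

variable (R) in
def artinSchreier : R →+ R where
  toFun t := t + t ^ 2
  map_zero' := by ring
  map_add' a b := by grind

theorem artinSchreier_apply (t : R) : artinSchreier R t = t + t ^ 2 := rfl

theorem mem_range_artinSchreier {x : R} :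
    x ∈ (artinSchreier R).range ↔ ∃ t, x = t + t ^ 2 := by
  simp [artinSchreier_apply, eq_comm]

theorem quartic_eq_quadFactor_mul (t : R) :
    (X ^ 4 + X ^ 3 + X ^ 2 + X + C ((t + t ^ 2) ^ 3) : R[X]) =
      quadFactor t * quadFactor (t + 1) := by
  simp only [quadFactor, map_add, map_pow, map_one]
  grind

theorem quadFactor_eq_mul_of_isRoot {t r : R} (hr : (quadFactor t).IsRoot r) :
    quadFactor t = (X + C r) * (X + C (r + t + 1)) := by
  have hC : C (r ^ 2 + (t + 1) * r + t ^ 3) = 0 := by rw [isRoot_quadFactor_iff.1 hr, map_zero]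
  simp only [quadFactor, map_add, map_pow, map_one, map_mul] at hC ⊢
  grind

end CommRing

section Field

variable {k : Type*} [Field k] [CharP k 2]

theorem mem_ker_artinSchreier {t : k} : t ∈ (artinSchreier k).ker ↔ t = 0 ∨ t = 1 := by
  rw [AddMonoidHom.mem_ker, artinSchreier_apply]
  grind

theorem card_ker_artinSchreier : Nat.card (artinSchreier k).ker = 2 := by
  have hker : ((artinSchreier k).ker : Set k) = {0, 1} := Set.ext fun _ => mem_ker_artinSchreier
  rw [← SetLike.coe_sort_coe, hker, Nat.card_coe_set_eq, Set.ncard_pair zero_ne_one]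

theorem index_range_artinSchreier [Finite k] : (artinSchreier k).range.index = 2 := by
  rw [AddSubgroup.index_range, card_ker_artinSchreier]

theorem exists_root_quadratic_iff {b c : k} (hb : b ≠ 0) :
    (∃ r, r ^ 2 + b * r + c = 0) ↔ c / b ^ 2 ∈ (artinSchreier k).range := by
  simp only [AddMonoidHom.mem_range, artinSchreier_apply]
  constructor
  · rintro ⟨r, hr⟩
    exact ⟨r / b, by field_simp; grind⟩
  · rintro ⟨z, hz⟩
    refine ⟨b * z, ?_⟩
    field_simp at hz
    grind

theorem mul_eq_artinSchreier_add {ε t : k} (hε : ε ^ 2 + ε + 1 = 0) (ht : t + 1 ≠ 0) :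
    (t + t ^ 2) * ε = artinSchreier k (t / (t + 1) + ε ^ 2 * t) + t ^ 3 / (t + 1) ^ 2 := by
  rw [artinSchreier_apply]
  field_simp
  grind

theorem exists_isRoot_quadFactor_iff {ε t : k} (hε : ε ^ 2 + ε + 1 = 0) (ht : t + t ^ 2 ≠ 0) :
    (∃ r, (quadFactor t).IsRoot r) ↔ (t + t ^ 2) * ε ∈ (artinSchreier k).range := by
  have hb : t + 1 ≠ 0 := fun h => ht (by linear_combination t * h)
  simp only [isRoot_quadFactor_iff]
  rw [exists_root_quadratic_iff hb, mul_eq_artinSchreier_add hε hb,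
    add_mem_cancel_left (AddMonoidHom.mem_range.2 ⟨_, rfl⟩)]

theorem irreducible_quadFactor {ε t : k} (hε : ε ^ 2 + ε + 1 = 0) (ht : t + t ^ 2 ≠ 0)
    (htε : (t + t ^ 2) * ε ∉ (artinSchreier k).range) : Irreducible (quadFactor t) :=
  irreducible_of_degree_le_three_of_not_isRoot
    (by simp [natDegree_eq_of_degree_eq_some (degree_quadFactor t)])
    fun r hr => htε ((exists_isRoot_quadFactor_iff hε ht).1 ⟨r, hr⟩)

theorem exists_quartic_eq_prod_X_add_C_of_mem_range {ε e μ : k} (hε : ε ^ 2 + ε + 1 = 0)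
    (he : e ≠ 0) (hμe : μ ^ 3 = e) (hμ : μ ∈ (artinSchreier k).range)
    (hμε : μ * ε ∈ (artinSchreier k).range) :
    ∃ z : Fin 4 → k, (X ^ 4 + X ^ 3 + X ^ 2 + X + C e : k[X]) = ∏ i, (X + C (z i)) := by
  obtain ⟨t, rfl⟩ := mem_range_artinSchreier.1 hμ
  subst hμe
  have ht : t + t ^ 2 ≠ 0 := fun h => he (by simp [h])
  have ht' : (t + 1) + (t + 1) ^ 2 = t + t ^ 2 := by grind
  obtain ⟨r, hr⟩ := (exists_isRoot_quadFactor_iff hε ht).2 hμε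
  obtain ⟨s, hs⟩ := (exists_isRoot_quadFactor_iff hε (ht' ▸ ht)).2 (ht' ▸ hμε)
  refine ⟨![r, r + t + 1, s, s + (t + 1) + 1], ?_⟩
  rw [quartic_eq_quadFactor_mul, quadFactor_eq_mul_of_isRoot hr, quadFactor_eq_mul_of_isRoot hs,
    Fin.prod_univ_four]
  simp [mul_assoc]

theorem exists_quartic_eq_mul_irreducible_of_mem_range {ε e μ : k} (hε : ε ^ 2 + ε + 1 = 0)
    (he : e ≠ 0) (hμe : μ ^ 3 = e) (hμ : μ ∈ (artinSchreier k).range)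
    (hμε : μ * ε ∉ (artinSchreier k).range) :
    ∃ f g : k[X], f.Monic ∧ f.degree = 2 ∧ Irreducible f ∧
      g.Monic ∧ g.degree = 2 ∧ Irreducible g ∧
      (X ^ 4 + X ^ 3 + X ^ 2 + X + C e : k[X]) = f * g := by
  obtain ⟨t, rfl⟩ := mem_range_artinSchreier.1 hμ
  subst hμe
  have ht : t + t ^ 2 ≠ 0 := fun h => he (by simp [h])
  have ht' : (t + 1) + (t + 1) ^ 2 = t + t ^ 2 := by grind
  refine ⟨quadFactor t, quadFactor (t + 1), monic_quadFactor t, degree_quadFactor t,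
    irreducible_quadFactor hε ht hμε, monic_quadFactor (t + 1), degree_quadFactor (t + 1),
    irreducible_quadFactor hε (ht' ▸ ht) (ht' ▸ hμε), quartic_eq_quadFactor_mul t⟩

end Field

theorem stmt_15_general (k : Type*) [Field k] [Fintype k] [CharP k 2]
    (ε : k) (hε : ε ^ 2 + ε + 1 = 0)
    (e lam : k) (he : e ≠ 0) (hlam : lam ^ 3 = e) :
    (((∃ t : k, lam = t + t ^ 2) ∧ (∃ t : k, lam * ε = t + t ^ 2) ∧
        (∃ t : k, lam * ε ^ 2 = t + t ^ 2)) →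
      ∃ z : Fin 4 → k, (X ^ 4 + X ^ 3 + X ^ 2 + X + C e : k[X])
          = ∏ i, (X + C (z i))) ∧
    ((¬ ((∃ t : k, lam = t + t ^ 2) ∧ (∃ t : k, lam * ε = t + t ^ 2) ∧
        (∃ t : k, lam * ε ^ 2 = t + t ^ 2))) →
      ∃ f g : k[X], f.Monic ∧ f.degree = 2 ∧ Irreducible f ∧
        g.Monic ∧ g.degree = 2 ∧ Irreducible g ∧
        (X ^ 4 + X ^ 3 + X ^ 2 + X + C e : k[X]) = f * g) := by
  simp only [← mem_range_artinSchreier]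
  have hε3 : ε ^ 3 = 1 := by linear_combination (ε - 1) * hε
  refine ⟨fun ⟨hA, hB, _⟩ => exists_quartic_eq_prod_X_add_C_of_mem_range hε he hlam hA hB,
    fun hnot => ?_⟩
  rcases AddSubgroup.mem_and_notMem_of_index_eq_two index_range_artinSchreier
    (by linear_combination lam * hε) hnot with ⟨hA, hB⟩ | ⟨hB, hC⟩ | ⟨hC, hA⟩
  · exact exists_quartic_eq_mul_irreducible_of_mem_range hε he hlam hA hB
  · refine exists_quartic_eq_mul_irreducible_of_mem_range hε he ?_ hB (by rwa [mul_assoc, ← sq])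
    rw [mul_pow, hε3, mul_one, hlam]
  · refine exists_quartic_eq_mul_irreducible_of_mem_range hε he ?_ hC ?_
    · linear_combination hlam + lam ^ 3 * (ε ^ 3 + 1) * hε3
    · rwa [mul_assoc, ← pow_succ, hε3, mul_one]

theorem stmt_15 (k : Type*) [Field k] [Fintype k] [CharP k 2]
    (m : ℕ) (hm : Even m) (hq : Fintype.card k = 2 ^ m)
    (ε : k) (hε : ε ^ 2 + ε + 1 = 0)
    (e lam : k) (he : e ≠ 0) (hlam : lam ^ 3 = e) :
    (((∃ t : k, lam = t + t ^ 2) ∧ (∃ t : k, lam * ε = t + t ^ 2) ∧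
        (∃ t : k, lam * ε ^ 2 = t + t ^ 2)) →
      ∃ z : Fin 4 → k, (X ^ 4 + X ^ 3 + X ^ 2 + X + C e : k[X])
          = ∏ i, (X + C (z i))) ∧
    ((¬ ((∃ t : k, lam = t + t ^ 2) ∧ (∃ t : k, lam * ε = t + t ^ 2) ∧
        (∃ t : k, lam * ε ^ 2 = t + t ^ 2))) →
      ∃ f g : k[X], f.Monic ∧ f.degree = 2 ∧ Irreducible f ∧
        g.Monic ∧ g.degree = 2 ∧ Irreducible g ∧
        (X ^ 4 + X ^ 3 + X ^ 2 + X + C e : k[X]) = f * g) :=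
  stmt_15_general k ε hε e lam he hlam
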